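/- Let Ψ(x,z) = (e^{xz}/((x−2)xz))·[[ (x³z² − 2x²z² − 2x²z + 3xz + 2x − 2)/(xz), 1/x ],[ (xz−2)/z, x²z − 2xz − x + 1 ]]. Then [[0,0],[0,1]]·∂ₓ²Ψ + [[0, 1/((x−2)x²)],[−1/(x−2), 0]]·∂ₓΨ + [[−1/(x²(x−2)²), (x−1)/(x³(x−2)²)],[(2x−1)/(x(x−2)²), −(2x²−4x+3)/(x²(x−2)²)]]·Ψ = Ψ·[[0,0],[0,z²]] for all x with x ≠ 0, x ≠ 2, and all z ≠ 0. -/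

import Mathlib

/-!
Every entry of `Ψ(·, z)` has the form `s ↦ exp (s z) P(s) / Q(s)` with polynomials `P` and the
common denominator `Q = z² X² (X - 2)`. This form is stable under differentiation: the `n`-th
derivative is `exp (s z) Pₙ(s) / Q(s)^(n+1)` with `Pₙ₊₁ = z Pₙ Q + Pₙ' Q - (n+1) Pₙ Q'`.
Substituting these closed forms turns each entry of the matrix equation into an identity of
rational functions in `x` and `z`, which holds after clearing denominators.
-/

open Matrix

noncomputable def Psi (x z : ℂ) : Matrix (Fin 2) (Fin 2) ℂ :=
  (Complex.exp (x * z) / ((x - 2) * x * z)) •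
    !![(x ^ 3 * z ^ 2 - 2 * x ^ 2 * z ^ 2 - 2 * x ^ 2 * z + 3 * x * z + 2 * x - 2) / (x * z),
         x⁻¹;
       (x * z - 2) / z, x ^ 2 * z - 2 * x * z - x + 1]

open Polynomial

noncomputable def cexpMulDivDerivNum (c : ℂ) (P Q : ℂ[X]) : ℕ → ℂ[X]
  | 0 => P
  | n + 1 =>
    C c * cexpMulDivDerivNum c P Q n * Q + derivative (cexpMulDivDerivNum c P Q n) * Q
      - ((n + 1 : ℕ) : ℂ[X]) * cexpMulDivDerivNum c P Q n * derivative Q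

theorem hasDerivAt_cexp_mul_div_pow (c : ℂ) (P Q : ℂ[X]) (k : ℕ) {x : ℂ} (hx : Q.eval x ≠ 0) :
    HasDerivAt (fun s => Complex.exp (s * c) * (P.eval s / Q.eval s ^ k))
      (Complex.exp (x * c) *
        ((C c * P * Q + derivative P * Q - (k : ℂ[X]) * P * derivative Q).eval x
          / Q.eval x ^ (k + 1))) x := by
  have hexp : HasDerivAt (fun s => Complex.exp (s * c)) (Complex.exp (x * c) * c) x := by
    simpa using ((hasDerivAt_id x).mul_const c).cexp
  have hpow : HasDerivAt (fun s => Q.eval s ^ k)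
      (k * Q.eval x ^ (k - 1) * (derivative Q).eval x) x :=
    (Q.hasDerivAt x).fun_pow k
  refine (hexp.mul ((P.hasDerivAt x).fun_div hpow (pow_ne_zero k hx))).congr_deriv ?_
  simp only [eval_sub, eval_add, eval_mul, eval_C, eval_natCast]
  rcases k with _ | k
  · field_simp
    ring
  · field_simp
    push_cast
    ring

theorem iteratedDeriv_cexp_mul_div (c : ℂ) (P Q : ℂ[X]) (n : ℕ) {x : ℂ} (hx : Q.eval x ≠ 0) :
    iteratedDeriv n (fun s => Complex.exp (s * c) * (P.eval s / Q.eval s)) x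
      = Complex.exp (x * c) * ((cexpMulDivDerivNum c P Q n).eval x / Q.eval x ^ (n + 1)) := by
  induction n generalizing x with
  | zero => simp [cexpMulDivDerivNum]
  | succ n ih =>
    have hQ : ∀ᶠ s in nhds x, Q.eval s ≠ 0 := Q.continuous.continuousAt.eventually_ne hx
    rw [iteratedDeriv_succ, Filter.EventuallyEq.deriv_eq (hQ.mono fun s hs => ih hs),
      (hasDerivAt_cexp_mul_div_pow c _ Q (n + 1) hx).deriv, cexpMulDivDerivNum]

noncomputable def psiDen (z : ℂ) : ℂ[X] := C (z ^ 2) * X ^ 2 * (X - 2)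

noncomputable def psiNum (z : ℂ) : Matrix (Fin 2) (Fin 2) ℂ[X] :=
  !![C (z ^ 2) * X ^ 3 - C (2 * z ^ 2 + 2 * z) * X ^ 2 + C (3 * z + 2) * X - 2, C z;
     X * (C z * X - 2), C z * X * (C z * X ^ 2 - C (2 * z + 1) * X + 1)]

/-- For `s ∈ {0, 2}` or `z = 0` both sides are `0`, by the convention `a / 0 = 0`. -/
theorem Psi_apply (s z : ℂ) (i j : Fin 2) :
    Psi s z i j = Complex.exp (s * z) * ((psiNum z i j).eval s / (psiDen z).eval s) := by
  rcases eq_or_ne s 0 with rfl | hs0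
  · simp [Psi, psiDen]
  rcases eq_or_ne s 2 with rfl | hs2
  · simp [Psi, psiDen]
  rcases eq_or_ne z 0 with rfl | hz
  · simp [Psi, psiDen]
  fin_cases i <;> fin_cases j <;>
    simp only [Fin.zero_eta, Fin.mk_one, Psi, psiNum, psiDen, Matrix.smul_apply, smul_eq_mul,
      of_apply, cons_val', cons_val_zero, cons_val_one, cons_val_fin_one, eval_sub, eval_add,
      eval_mul, eval_pow, eval_C, eval_X, eval_ofNat, eval_one] <;>
    field_simp <;> ring

theorem iteratedDeriv_Psi_apply (n : ℕ) {x z : ℂ} (hx0 : x ≠ 0) (hx2 : x ≠ 2) (hz : z ≠ 0)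
    (i j : Fin 2) :
    iteratedDeriv n (fun s => Psi s z i j) x = Complex.exp (x * z) *
      ((cexpMulDivDerivNum z (psiNum z i j) (psiDen z) n).eval x
        / (psiDen z).eval x ^ (n + 1)) := by
  simp_rw [Psi_apply]
  exact iteratedDeriv_cexp_mul_div _ _ _ n (by simp [psiDen, hx0, hz, sub_ne_zero.mpr hx2])

theorem stmt9 (x z : ℂ) (hx0 : x ≠ 0) (hx2 : x ≠ 2) (hz : z ≠ 0) :
    !![(0 : ℂ), 0; 0, 1] * (Matrix.of fun i j => iteratedDeriv 2 (fun s => Psi s z i j) x)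
      + !![0, ((x - 2) * x ^ 2)⁻¹; -(x - 2)⁻¹, 0]
        * (Matrix.of fun i j => deriv (fun s => Psi s z i j) x)
      + !![-(x ^ 2 * (x - 2) ^ 2)⁻¹, (x - 1) / (x ^ 3 * (x - 2) ^ 2);
           (2 * x - 1) / (x * (x - 2) ^ 2), -(2 * x ^ 2 - 4 * x + 3) / (x ^ 2 * (x - 2) ^ 2)]
        * Psi x z
      = Psi x z * !![0, 0; 0, z ^ 2] := by
  simp only [← iteratedDeriv_one, iteratedDeriv_Psi_apply _ hx0 hx2 hz]
  ext i j
  fin_cases i <;> fin_cases j <;>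
    simp only [Fin.zero_eta, Fin.mk_one, Matrix.add_apply, mul_apply, Fin.sum_univ_two, of_apply,
      cons_val', cons_val_zero, cons_val_one, empty_val', cons_val_fin_one, Psi_apply,
      cexpMulDivDerivNum, psiNum, psiDen, derivative_sub, derivative_add, derivative_mul,
      derivative_pow, derivative_C, derivative_X, derivative_ofNat, derivative_one, eval_sub,
      eval_add, eval_mul, eval_pow, eval_C, eval_X, eval_ofNat, eval_one, eval_zero,
      eval_natCast, Nat.cast_ofNat, Nat.cast_one, Nat.add_one_sub_one, pow_one, zero_mul,
      mul_zero, one_mul, mul_one, zero_add, add_zero, sub_zero] <;>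
    field_simp <;> ring
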